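/- Let d₁, d₂ ≥ 1 and let φ ∈ C_c^∞(ℝ^{d₂}) vanish on a neighborhood of the origin. Then the function G on ℝ^{d₁}×ℝ^{d₂} defined by G(ξ, a) = φ(a) e^{−|ξ|²/(2|a|)} for a ≠ 0 and G(ξ, 0) = 0 is a Schwartz function on ℝ^{d₁}×ℝ^{d₂}. -/

import Mathlib

open MeasureTheory
open scoped ENNReal
open scoped ContDiff

variable {E F G H : Type*} [NormedAddCommGroup E] [NormedSpace ℝ E]
  [NormedAddCommGroup F] [NormedSpace ℝ F] [NormedAddCommGroup G] [NormedSpace ℝ G]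

lemma my_iteratedFDeriv_eventually_const {f : E → F} {x : E} {c : F}
    (h : f =ᶠ[nhds x] fun _ => c) {n : ℕ} (hn : n ≠ 0) : iteratedFDeriv ℝ n f x = 0 := by
  have h1 : iteratedFDeriv ℝ n f x = iteratedFDeriv ℝ n (fun _ => c) x := by
    rw [← iteratedFDerivWithin_univ, ← iteratedFDerivWithin_univ]
    exact (h.filter_mono nhdsWithin_le_nhds).iteratedFDerivWithin_eq h.self_of_nhds n
  rw [h1, iteratedFDeriv_const_of_ne hn]
  rfl

lemma my_tg_add {f g : E → F} (hf : Function.HasTemperateGrowth f)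
    (hg : Function.HasTemperateGrowth g) :
    Function.HasTemperateGrowth (fun x => f x + g x) := by
  refine ⟨hf.1.add hg.1, fun n => ?_⟩
  obtain ⟨k₁, C₁, h₁⟩ := hf.2 n
  obtain ⟨k₂, C₂, h₂⟩ := hg.2 n
  refine ⟨max k₁ k₂, max C₁ 0 + max C₂ 0, fun x => ?_⟩
  have hx : (1:ℝ) ≤ 1 + ‖x‖ := by linarith [norm_nonneg x]
  have e : iteratedFDeriv ℝ n (fun x => f x + g x) x =
      iteratedFDeriv ℝ n f x + iteratedFDeriv ℝ n g x :=
    iteratedFDeriv_add_apply (hf.1.contDiffAt.of_le (WithTop.coe_le_coe.2 le_top)) (hg.1.contDiffAt.of_le (WithTop.coe_le_coe.2 le_top))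
  calc ‖iteratedFDeriv ℝ n (fun x => f x + g x) x‖
      ≤ ‖iteratedFDeriv ℝ n f x‖ + ‖iteratedFDeriv ℝ n g x‖ := by rw [e]; exact norm_add_le _ _
    _ ≤ C₁ * (1 + ‖x‖) ^ k₁ + C₂ * (1 + ‖x‖) ^ k₂ := add_le_add (h₁ x) (h₂ x)
    _ ≤ max C₁ 0 * (1 + ‖x‖) ^ max k₁ k₂ + max C₂ 0 * (1 + ‖x‖) ^ max k₁ k₂ := by
        gcongr <;> first | exact le_max_left _ _ | exact le_max_right _ _ | exact hx
    _ = (max C₁ 0 + max C₂ 0) * (1 + ‖x‖) ^ max k₁ k₂ := by ring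

lemma my_tg_mul {f g : E → ℝ} (hf : Function.HasTemperateGrowth f)
    (hg : Function.HasTemperateGrowth g) :
    Function.HasTemperateGrowth (fun x => f x * g x) := by
  refine ⟨hf.1.mul hg.1, fun n => ?_⟩
  obtain ⟨k₁, C₁, hC₁, h₁⟩ := hf.norm_iteratedFDeriv_le_uniform n
  obtain ⟨k₂, C₂, hC₂, h₂⟩ := hg.norm_iteratedFDeriv_le_uniform n
  refine ⟨k₁ + k₂, 2 ^ n * (C₁ * C₂), fun x => ?_⟩
  have hx : (1:ℝ) ≤ 1 + ‖x‖ := by linarith [norm_nonneg x]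
  calc ‖iteratedFDeriv ℝ n (fun y => f y * g y) x‖
      ≤ ∑ i ∈ Finset.range (n + 1),
          (n.choose i : ℝ) * ‖iteratedFDeriv ℝ i f x‖ * ‖iteratedFDeriv ℝ (n - i) g x‖ :=
        norm_iteratedFDeriv_mul_le (hf.1) (hg.1) x (by exact_mod_cast le_top)
    _ ≤ ∑ i ∈ Finset.range (n + 1),
          (n.choose i : ℝ) * (C₁ * C₂ * (1 + ‖x‖) ^ (k₁ + k₂)) := by
        refine Finset.sum_le_sum fun i hi => ?_
        rw [Finset.mem_range_succ_iff] at hi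
        have e1 := h₁ i hi x
        have e2 := h₂ (n - i) (Nat.sub_le n i) x
        have : ‖iteratedFDeriv ℝ i f x‖ * ‖iteratedFDeriv ℝ (n - i) g x‖
            ≤ (C₁ * (1 + ‖x‖) ^ k₁) * (C₂ * (1 + ‖x‖) ^ k₂) := by
          apply mul_le_mul e1 e2 (norm_nonneg _) (by positivity)
        calc (n.choose i : ℝ) * ‖iteratedFDeriv ℝ i f x‖ * ‖iteratedFDeriv ℝ (n - i) g x‖
            = (n.choose i : ℝ) * (‖iteratedFDeriv ℝ i f x‖ * ‖iteratedFDeriv ℝ (n - i) g x‖) := by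
              ring
          _ ≤ (n.choose i : ℝ) * ((C₁ * (1 + ‖x‖) ^ k₁) * (C₂ * (1 + ‖x‖) ^ k₂)) := by
              apply mul_le_mul_of_nonneg_left this (by positivity)
          _ = (n.choose i : ℝ) * (C₁ * C₂ * (1 + ‖x‖) ^ (k₁ + k₂)) := by rw [pow_add]; ring
    _ = 2 ^ n * (C₁ * C₂) * (1 + ‖x‖) ^ (k₁ + k₂) := by
        rw [← Finset.sum_mul]
        norm_cast
        rw [Nat.sum_range_choose]
        push_cast
        ring

lemma my_tg_comp {f : F → G} {g : E → F} (hf : Function.HasTemperateGrowth f)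
    (hg : Function.HasTemperateGrowth g) :
    Function.HasTemperateGrowth (f ∘ g) := by
  refine ⟨hf.1.comp hg.1, fun n => ?_⟩
  obtain ⟨k₁, C₁, hC₁, h₁⟩ := hf.norm_iteratedFDeriv_le_uniform n
  obtain ⟨k₂, C₂, hC₂, h₂⟩ := hg.norm_iteratedFDeriv_le_uniform n
  obtain ⟨k₀, C₀, hC₀, h₀⟩ := hg.norm_iteratedFDeriv_le_uniform 0
  -- ‖g x‖ ≤ C₀ (1+‖x‖)^k₀
  refine ⟨k₀ * k₁ + k₂ * n, (n.factorial : ℝ) * (C₁ * (1 + C₀) ^ k₁) * (1 + C₂) ^ n,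
    fun x => ?_⟩
  have hx : (1:ℝ) ≤ 1 + ‖x‖ := by linarith [norm_nonneg x]
  have hgx : ‖g x‖ ≤ C₀ * (1 + ‖x‖) ^ k₀ := by simpa using h₀ 0 le_rfl x
  set D : ℝ := max 1 (C₂ * (1 + ‖x‖) ^ k₂) with hD
  have hD1 : (1:ℝ) ≤ D := le_max_left _ _
  have hDb : D ≤ (1 + C₂) * (1 + ‖x‖) ^ k₂ := by
    apply max_le
    · calc (1:ℝ) ≤ (1 + ‖x‖) ^ k₂ := one_le_pow₀ hx
        _ ≤ (1 + C₂) * (1 + ‖x‖) ^ k₂ := by nlinarith [pow_pos (show (0:ℝ) < 1 + ‖x‖ by linarith) k₂]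
    · nlinarith [pow_pos (show (0:ℝ) < 1 + ‖x‖ by linarith) k₂, pow_nonneg (show (0:ℝ) ≤ 1 + ‖x‖ by linarith) k₂]
  have key : ‖iteratedFDeriv ℝ n (f ∘ g) x‖ ≤
      (n.factorial : ℝ) * (C₁ * (1 + C₀ * (1 + ‖x‖) ^ k₀) ^ k₁) * D ^ n := by
    apply norm_iteratedFDeriv_comp_le hf.1 hg.1 (by exact_mod_cast le_top) x
    case hC =>
      intro i hi
      calc ‖iteratedFDeriv ℝ i f (g x)‖ ≤ C₁ * (1 + ‖g x‖) ^ k₁ := h₁ i hi (g x)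
        _ ≤ C₁ * (1 + C₀ * (1 + ‖x‖) ^ k₀) ^ k₁ := by
            gcongr
    case hD =>
      intro i hi1 hin
      calc ‖iteratedFDeriv ℝ i g x‖ ≤ C₂ * (1 + ‖x‖) ^ k₂ := h₂ i hin x
        _ ≤ D := le_max_right _ _
        _ ≤ D ^ i := le_self_pow₀ (by linarith) (by omega)
  calc ‖iteratedFDeriv ℝ n (f ∘ g) x‖
      ≤ (n.factorial : ℝ) * (C₁ * (1 + C₀ * (1 + ‖x‖) ^ k₀) ^ k₁) * D ^ n := key
    _ ≤ (n.factorial : ℝ) * (C₁ * ((1 + C₀) * (1 + ‖x‖) ^ k₀) ^ k₁) *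
          ((1 + C₂) * (1 + ‖x‖) ^ k₂) ^ n := by
        have hxp : (0:ℝ) < 1 + ‖x‖ := by linarith
        have h5 : (1:ℝ) + C₀ * (1 + ‖x‖) ^ k₀ ≤ (1 + C₀) * (1 + ‖x‖) ^ k₀ := by
          nlinarith [pow_pos hxp k₀, one_le_pow₀ hx (n := k₀)]
        have h6 : D ^ n ≤ ((1 + C₂) * (1 + ‖x‖) ^ k₂) ^ n := pow_le_pow_left₀ (by linarith) hDb n
        have h7 : C₁ * (1 + C₀ * (1 + ‖x‖) ^ k₀) ^ k₁ ≤ C₁ * ((1 + C₀) * (1 + ‖x‖) ^ k₀) ^ k₁ := by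
          apply mul_le_mul_of_nonneg_left (pow_le_pow_left₀ (by positivity) h5 k₁) hC₁
        apply mul_le_mul (mul_le_mul_of_nonneg_left h7 (by positivity)) h6 (by positivity)
          (by positivity)
    _ = (n.factorial : ℝ) * (C₁ * (1 + C₀) ^ k₁) * (1 + C₂) ^ n *
          (1 + ‖x‖) ^ (k₀ * k₁ + k₂ * n) := by
        rw [mul_pow, mul_pow, pow_add, ← pow_mul, ← pow_mul]
        ring

lemma my_tg_of_compactSupport {f : E → F} (hf : ContDiff ℝ ∞ f) (hc : HasCompactSupport f) :
    Function.HasTemperateGrowth f := by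
  refine ⟨hf, fun n => ?_⟩
  obtain ⟨C, hC⟩ := (hc.iteratedFDeriv n).exists_bound_of_continuous
    (hf.continuous_iteratedFDeriv (by exact_mod_cast le_top))
  refine ⟨0, C, fun x => ?_⟩
  simpa using hC x

lemma my_tg_sum {ι : Type*} (s : Finset ι) (f : ι → E → ℝ)
    (h : ∀ i ∈ s, Function.HasTemperateGrowth (f i)) :
    Function.HasTemperateGrowth (fun x => ∑ i ∈ s, f i x) := by
  classical
  induction s using Finset.induction_on with
  | empty => simpa using Function.HasTemperateGrowth.const (0:ℝ)
  | insert a t hns ih =>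
    simp only [Finset.sum_insert hns]
    exact my_tg_add (h a (Finset.mem_insert_self a t))
      (ih fun i hi => h i (Finset.mem_insert_of_mem hi))

lemma my_exists_schwartz_expNeg :
    ∃ Es : SchwartzMap ℝ ℝ, ∀ t : ℝ, 0 ≤ t → Es t = Real.exp (-t) := by
  set θ : ℝ → ℝ := fun t => Real.smoothTransition (t + 1) with hθ
  set e : ℝ → ℝ := fun t => Real.exp (-1 * t) with he
  have θsm : ContDiff ℝ ∞ θ :=
    (Real.smoothTransition.contDiff (n := (⊤ : ℕ∞))).comp (contDiff_id.add contDiff_const)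
  have esm : ContDiff ℝ ∞ e :=
    Real.contDiff_exp.comp (contDiff_const.mul contDiff_id)
  have eF : ∀ n : ℕ, ∀ t : ℝ, ‖iteratedFDeriv ℝ n e t‖ = Real.exp (-t) := by
    intro n t
    rw [norm_iteratedFDeriv_eq_norm_iteratedDeriv, he]
    have := iteratedDeriv_exp_const_mul n (-1)
    rw [this]
    simp [abs_of_pos (Real.exp_pos _), abs_pow]
  have θlow : ∀ t : ℝ, t < -1 → θ t = 0 := fun t ht =>
    Real.smoothTransition.zero_of_nonpos (by linarith)
  have θhigh : ∀ t : ℝ, 0 < t → θ t = 1 := fun t ht =>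
    Real.smoothTransition.one_of_one_le (by linarith)
  have θbd : ∀ i : ℕ, ∃ B : ℝ, 0 ≤ B ∧ ∀ t : ℝ, ‖iteratedFDeriv ℝ i θ t‖ ≤ B := by
    intro i
    rcases Nat.eq_zero_or_pos i with hi | hi
    · subst hi
      refine ⟨1, zero_le_one, fun t => ?_⟩
      rw [norm_iteratedFDeriv_zero, Real.norm_eq_abs, abs_of_nonneg (Real.smoothTransition.nonneg _)]
      exact Real.smoothTransition.le_one _
    · have hszero : ∀ t : ℝ, t ∉ Set.Icc (-1 : ℝ) 0 → iteratedFDeriv ℝ i θ t = 0 := by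
        intro t ht
        rw [Set.mem_Icc, not_and_or, not_le, not_le] at ht
        rcases ht with ht | ht
        · refine my_iteratedFDeriv_eventually_const (c := 0) ?_ (by omega)
          filter_upwards [Iio_mem_nhds ht] with y hy
          exact θlow y hy
        · refine my_iteratedFDeriv_eventually_const (c := 1) ?_ (by omega)
          filter_upwards [Ioi_mem_nhds ht] with y hy
          exact θhigh y hy
      have hcs : HasCompactSupport (iteratedFDeriv ℝ i θ) :=
        HasCompactSupport.intro isCompact_Icc hszero
      obtain ⟨B, hB⟩ := hcs.exists_bound_of_continuous
        (θsm.continuous_iteratedFDeriv (by exact_mod_cast le_top))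
      exact ⟨max B 0, le_max_right _ _, fun t => (hB t).trans (le_max_left _ _)⟩
  set Ef : ℝ → ℝ := fun t => θ t * e t with hEf
  have Efsm : ContDiff ℝ ∞ Ef := θsm.mul esm
  have Eflow : ∀ n : ℕ, ∀ t : ℝ, t < -1 → iteratedFDeriv ℝ n Ef t = 0 := by
    intro n t ht
    have h0 : Ef =ᶠ[nhds t] fun _ => (0 : ℝ) := by
      filter_upwards [Iio_mem_nhds ht] with y hy
      simp [hEf, θlow y hy]
    rcases Nat.eq_zero_or_pos n with hn | hn
    · subst hn
      ext m
      simp [iteratedFDeriv_zero_apply, h0.self_of_nhds]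
    · exact my_iteratedFDeriv_eventually_const h0 (by omega)
  refine ⟨⟨Ef, Efsm, ?_⟩, fun t ht => ?_⟩
  · intro k n
    choose B hB0 hB using θbd
    set K : ℝ := ∑ i ∈ Finset.range (n + 1), (n.choose i : ℝ) * B i with hK
    have hK0 : 0 ≤ K := Finset.sum_nonneg fun i _ => mul_nonneg (by positivity) (hB0 i)
    have hbound : ∀ t : ℝ, ‖iteratedFDeriv ℝ n Ef t‖ ≤ K * Real.exp (-t) := by
      intro t
      calc ‖iteratedFDeriv ℝ n Ef t‖
          ≤ ∑ i ∈ Finset.range (n + 1),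
              (n.choose i : ℝ) * ‖iteratedFDeriv ℝ i θ t‖ * ‖iteratedFDeriv ℝ (n - i) e t‖ :=
            norm_iteratedFDeriv_mul_le θsm esm t (by exact_mod_cast le_top)
        _ ≤ ∑ i ∈ Finset.range (n + 1), (n.choose i : ℝ) * B i * Real.exp (-t) := by
            refine Finset.sum_le_sum fun i _ => ?_
            rw [eF]
            apply mul_le_mul_of_nonneg_right _ (Real.exp_pos _).le
            exact mul_le_mul_of_nonneg_left (hB i t) (by positivity)
        _ = K * Real.exp (-t) := by rw [hK, Finset.sum_mul]
    refine ⟨K * (Real.exp 1 + k.factorial), fun t => ?_⟩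
    rcases lt_or_ge t (-1) with ht | ht
    · rw [Eflow n t ht]
      have : (0:ℝ) ≤ K * (Real.exp 1 + k.factorial) := by positivity
      simpa using this
    · have hA : ‖t‖ ^ k * Real.exp (-t) ≤ Real.exp 1 + k.factorial := by
        rcases le_or_gt t 0 with ht0 | ht0
        · have h1 : ‖t‖ ≤ 1 := by rw [Real.norm_eq_abs, abs_le]; constructor <;> linarith
          have h2 : ‖t‖ ^ k ≤ 1 := pow_le_one₀ (norm_nonneg t) h1
          have h3 : Real.exp (-t) ≤ Real.exp 1 := Real.exp_le_exp.2 (by linarith)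
          nlinarith [Real.exp_pos (-t), (by positivity : (0:ℝ) < (k.factorial : ℝ))]
        · have h1 : t ^ k / k.factorial ≤ Real.exp t := Real.pow_div_factorial_le_exp (x := t) ht0.le k
          have h2 : t ^ k ≤ k.factorial * Real.exp t := by
            rw [div_le_iff₀ (by positivity)] at h1
            linarith
          rw [Real.norm_eq_abs, abs_of_pos ht0, Real.exp_neg]
          rw [mul_inv_le_iff₀ (Real.exp_pos t)]
          calc t ^ k ≤ (k.factorial : ℝ) * Real.exp t := h2
            _ ≤ (Real.exp 1 + k.factorial) * Real.exp t := by
                nlinarith [Real.exp_pos t, Real.exp_pos (1:ℝ)]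
      calc ‖t‖ ^ k * ‖iteratedFDeriv ℝ n Ef t‖
          ≤ ‖t‖ ^ k * (K * Real.exp (-t)) :=
            mul_le_mul_of_nonneg_left (hbound t) (by positivity)
        _ = K * (‖t‖ ^ k * Real.exp (-t)) := by ring
        _ ≤ K * (Real.exp 1 + k.factorial) := mul_le_mul_of_nonneg_left hA hK0
  · show Ef t = Real.exp (-t)
    rw [hEf]
    simp only
    rw [hθ]
    simp only
    rw [Real.smoothTransition.one_of_one_le (by linarith), he]
    norm_num

lemma my_tg_normsq (d : ℕ) :
    Function.HasTemperateGrowth (fun ξ : EuclideanSpace ℝ (Fin d) => ‖ξ‖ ^ 2) := by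
  have heq : (fun ξ : EuclideanSpace ℝ (Fin d) => ‖ξ‖ ^ 2) =
      fun ξ => ∑ i : Fin d, ξ i * ξ i := by
    funext ξ
    rw [EuclideanSpace.norm_eq, Real.sq_sqrt (by positivity)]
    congr 1
    funext i
    rw [Real.norm_eq_abs, sq, ← abs_mul, abs_mul_self]
  rw [heq]
  exact my_tg_sum Finset.univ _ fun i _ =>
    my_tg_mul (EuclideanSpace.proj (𝕜 := ℝ) i).hasTemperateGrowth
      (EuclideanSpace.proj (𝕜 := ℝ) i).hasTemperateGrowth


open Classical in
theorem gaussian_cutoff_schwartz (d₁ d₂ : ℕ) (hd₁ : 1 ≤ d₁) (hd₂ : 1 ≤ d₂)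
    (φ : EuclideanSpace ℝ (Fin d₂) → ℝ) (hφ : ContDiff ℝ (⊤ : ℕ∞) φ) (hφc : HasCompactSupport φ)
    (hφ0 : ∀ᶠ a in nhds (0 : EuclideanSpace ℝ (Fin d₂)), φ a = 0) :
    ∃ G : SchwartzMap (EuclideanSpace ℝ (Fin d₁) × EuclideanSpace ℝ (Fin d₂)) ℝ,
      ∀ (ξ : EuclideanSpace ℝ (Fin d₁)) (a : EuclideanSpace ℝ (Fin d₂)),
        G (ξ, a) = if a = 0 then 0 else φ a * Real.exp (-‖ξ‖ ^ 2 / (2 * ‖a‖)) := by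
  obtain ⟨Es, hEs⟩ := my_exists_schwartz_expNeg
  obtain ⟨ε, hε, hball⟩ : ∃ ε > 0, ∀ y : (EuclideanSpace ℝ (Fin d₂)), ‖y‖ < ε → φ y = 0 := by
    rw [Metric.eventually_nhds_iff] at hφ0
    obtain ⟨ε, hε0, h⟩ := hφ0
    exact ⟨ε, hε0, fun y hy => h (by simpa [dist_zero_right] using hy)⟩
  have hts : ∀ a ∈ tsupport φ, ε ≤ ‖a‖ := by
    intro a ha
    have hsub : tsupport φ ⊆ {a : (EuclideanSpace ℝ (Fin d₂)) | ε ≤ ‖a‖} := by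
      apply closure_minimal
      · intro a ha
        by_contra h
        exact ha (hball a (lt_of_not_ge h))
      · exact isClosed_le continuous_const continuous_norm
    exact hsub ha
  obtain ⟨r, hr⟩ := hφc.isBounded.subset_closedBall (0 : (EuclideanSpace ℝ (Fin d₂)))
  set R : ℝ := max r 0 + 2 with hR
  have hRpos : 0 < R := by positivity
  have htsR : ∀ a ∈ tsupport φ, ‖a‖ ≤ max r 0 := by
    intro a ha
    have := hr ha
    rw [Metric.mem_closedBall, dist_zero_right] at this
    exact this.trans (le_max_left _ _)
  set χ : (EuclideanSpace ℝ (Fin d₂)) → ℝ := fun a =>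
    Real.smoothTransition ((2 / ε) * ‖a‖ - 1) * Real.smoothTransition (R - ‖a‖) with hχ
  have hχ0 : ∀ a, 0 ≤ χ a := fun a =>
    mul_nonneg (Real.smoothTransition.nonneg _) (Real.smoothTransition.nonneg _)
  have hχle1 : ∀ a, χ a ≤ 1 := fun a =>
    mul_le_one₀ (Real.smoothTransition.le_one _) (Real.smoothTransition.nonneg _)
      (Real.smoothTransition.le_one _)
  have hχ1 : ∀ a ∈ tsupport φ, χ a = 1 := by
    intro a ha
    have h1 : (1:ℝ) ≤ (2 / ε) * ‖a‖ - 1 := by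
      have h2 : (2 / ε) * ε ≤ (2 / ε) * ‖a‖ := by
        apply mul_le_mul_of_nonneg_left (hts a ha) (by positivity)
      rw [div_mul_cancel₀] at h2 <;> [skip; positivity]
      linarith
    have h2 : (1:ℝ) ≤ R - ‖a‖ := by
      have := htsR a ha
      rw [hR]; linarith
    rw [hχ]
    simp only
    rw [Real.smoothTransition.one_of_one_le h1, Real.smoothTransition.one_of_one_le h2, mul_one]
  have hχsupp : ∀ a, χ a ≠ 0 → ε / 2 < ‖a‖ ∧ ‖a‖ < R := by
    intro a ha
    rw [hχ, mul_ne_zero_iff] at ha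
    obtain ⟨h1, h2⟩ := ha
    constructor
    · by_contra h
      push_neg at h
      apply h1
      apply Real.smoothTransition.zero_of_nonpos
      have h4 : (2 / ε) * (ε / 2) = 1 := by field_simp
      have h5 : (2 / ε) * ‖a‖ ≤ (2 / ε) * (ε / 2) :=
        mul_le_mul_of_nonneg_left h (by positivity)
      linarith
    · by_contra h
      push_neg at h
      exact h2 (Real.smoothTransition.zero_of_nonpos (by linarith))
  have hχ0near : ∀ a : (EuclideanSpace ℝ (Fin d₂)), ‖a‖ ≤ ε / 2 → χ a = 0 := by
    intro a ha
    rw [hχ]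
    simp only
    rw [Real.smoothTransition.zero_of_nonpos, zero_mul]
    have : (2 / ε) * ‖a‖ ≤ (2 / ε) * (ε / 2) := by
      apply mul_le_mul_of_nonneg_left ha (by positivity)
    have h3 : (2 / ε) * (ε / 2) = 1 := by field_simp
    linarith
  set ρ : (EuclideanSpace ℝ (Fin d₂)) → ℝ := fun a => χ a * ((2 * ‖a‖)⁻¹ - 1) with hρ
  have hρsm : ContDiff ℝ ∞ ρ := by
    rw [contDiff_iff_contDiffAt]
    intro x
    by_cases hx : ‖x‖ < ε / 2
    · apply ContDiffAt.congr_of_eventuallyEq (contDiffAt_const (c := (0:ℝ)))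
      have hopen : IsOpen {y : (EuclideanSpace ℝ (Fin d₂)) | ‖y‖ < ε / 2} := isOpen_lt continuous_norm continuous_const
      filter_upwards [hopen.mem_nhds hx] with y hy
      rw [hρ]
      simp only
      rw [hχ0near y (le_of_lt hy), zero_mul]
    · have hx0 : x ≠ 0 := by
        intro h
        apply hx
        rw [h, norm_zero]
        positivity
      have hnorm : ContDiffAt ℝ ∞ (fun y : (EuclideanSpace ℝ (Fin d₂)) => ‖y‖) x := contDiffAt_norm ℝ hx0
      have hχAt : ContDiffAt ℝ ∞ χ x := by
        apply ContDiffAt.mul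
        · exact (Real.smoothTransition.contDiffAt (n := (⊤:ℕ∞))).comp x
            ((contDiffAt_const.mul hnorm).sub contDiffAt_const)
        · exact (Real.smoothTransition.contDiffAt (n := (⊤:ℕ∞))).comp x
            (contDiffAt_const.sub hnorm)
      apply hχAt.mul
      apply ContDiffAt.sub _ contDiffAt_const
      apply ContDiffAt.inv (contDiffAt_const.mul hnorm)
      simp only [ne_eq, mul_eq_zero]
      push_neg
      refine ⟨by norm_num, by simpa using hx0⟩
  have hρcs : HasCompactSupport ρ := by
    apply HasCompactSupport.intro (isCompact_closedBall (0 : (EuclideanSpace ℝ (Fin d₂))) R)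
    intro a ha
    rw [Metric.mem_closedBall, dist_zero_right, not_le] at ha
    rw [hρ]
    simp only
    by_cases h : χ a = 0
    · rw [h, zero_mul]
    · exact absurd ((hχsupp a h).2) (by linarith)
  set ψ : (EuclideanSpace ℝ (Fin d₂)) → ℝ := fun a => ρ a + 1 with hψ
  have hψiff : ∀ a, ψ a = χ a * (2 * ‖a‖)⁻¹ + (1 - χ a) := by
    intro a; rw [hψ, hρ]; simp only; ring
  set δ : ℝ := min ((2 * R)⁻¹) 1 with hδ
  have hδpos : 0 < δ := by
    rw [hδ]
    apply lt_min _ one_pos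
    positivity
  have hψδ : ∀ a, δ ≤ ψ a := by
    intro a
    rw [hψiff]
    by_cases h : χ a = 0
    · rw [h]; simp
      exact min_le_right _ _
    · obtain ⟨h1, h2⟩ := hχsupp a h
      have hna : 0 < ‖a‖ := lt_trans (by positivity) h1
      have hinv : (2 * R)⁻¹ ≤ (2 * ‖a‖)⁻¹ := by
        apply inv_anti₀ (by positivity)
        linarith
      have hδinv : δ ≤ (2 * ‖a‖)⁻¹ := le_trans (min_le_left _ _) hinv
      have hδ1 : δ ≤ 1 := min_le_right _ _
      nlinarith [hχ0 a, hχle1 a]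
  have hψ_supp : ∀ a, φ a ≠ 0 → ψ a = (2 * ‖a‖)⁻¹ := by
    intro a ha
    rw [hψiff, hχ1 a (subset_tsupport φ (by exact ha))]
    ring
  have tgψ : Function.HasTemperateGrowth ψ :=
    my_tg_add (my_tg_of_compactSupport hρsm hρcs) (Function.HasTemperateGrowth.const 1)
  set u : (EuclideanSpace ℝ (Fin d₁)) × (EuclideanSpace ℝ (Fin d₂)) → ℝ := fun x => ψ x.2 * ‖x.1‖ ^ 2 + ‖x.2‖ ^ 2 with hu
  have tgfst : Function.HasTemperateGrowth (fun x : (EuclideanSpace ℝ (Fin d₁)) × (EuclideanSpace ℝ (Fin d₂)) => ‖x.1‖ ^ 2) :=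
    my_tg_comp (my_tg_normsq d₁) (ContinuousLinearMap.fst ℝ (EuclideanSpace ℝ (Fin d₁)) (EuclideanSpace ℝ (Fin d₂))).hasTemperateGrowth
  have tgsnd : Function.HasTemperateGrowth (fun x : (EuclideanSpace ℝ (Fin d₁)) × (EuclideanSpace ℝ (Fin d₂)) => ‖x.2‖ ^ 2) :=
    my_tg_comp (my_tg_normsq d₂) (ContinuousLinearMap.snd ℝ (EuclideanSpace ℝ (Fin d₁)) (EuclideanSpace ℝ (Fin d₂))).hasTemperateGrowth
  have tgψsnd : Function.HasTemperateGrowth (fun x : (EuclideanSpace ℝ (Fin d₁)) × (EuclideanSpace ℝ (Fin d₂)) => ψ x.2) :=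
    my_tg_comp tgψ (ContinuousLinearMap.snd ℝ (EuclideanSpace ℝ (Fin d₁)) (EuclideanSpace ℝ (Fin d₂))).hasTemperateGrowth
  have tgu : Function.HasTemperateGrowth u :=
    my_tg_add (my_tg_mul tgψsnd tgfst) tgsnd
  have hu0 : ∀ x, 0 ≤ u x := by
    intro x
    simp only [hu]
    have h1 : 0 ≤ ψ x.2 * ‖x.1‖ ^ 2 :=
      mul_nonneg (le_trans hδpos.le (hψδ x.2)) (sq_nonneg _)
    nlinarith [sq_nonneg ‖x.2‖]
  set c : ℝ := min δ 1 with hc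
  have hcpos : 0 < c := lt_min hδpos one_pos
  have hkey : ∀ x : (EuclideanSpace ℝ (Fin d₁)) × (EuclideanSpace ℝ (Fin d₂)), c * ‖x‖ ^ 2 ≤ u x := by
    intro x
    rw [Prod.norm_def]
    simp only [hu]
    have hψx := hψδ x.2
    have hc1 : c ≤ 1 := min_le_right _ _
    have hcδ : c ≤ δ := min_le_left _ _
    rcases le_total ‖x.1‖ ‖x.2‖ with h | h
    · rw [max_eq_right h]
      nlinarith [mul_nonneg (le_trans hδpos.le hψx) (sq_nonneg ‖x.1‖), sq_nonneg ‖x.2‖]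
    · rw [max_eq_left h]
      nlinarith [sq_nonneg ‖x.1‖, sq_nonneg ‖x.2‖,
        mul_le_mul_of_nonneg_right (le_trans hcδ hψx) (sq_nonneg ‖x.1‖)]
  have hu_upper : ∃ (k : ℕ) (C : ℝ), ∀ x : (EuclideanSpace ℝ (Fin d₁)) × (EuclideanSpace ℝ (Fin d₂)), ‖x‖ ≤ C * (1 + ‖u x‖) ^ k := by
    refine ⟨1, max 1 c⁻¹, fun x => ?_⟩
    have hux : ‖u x‖ = u x := by rw [Real.norm_eq_abs, abs_of_nonneg (hu0 x)]
    have h1max : (1:ℝ) ≤ max 1 c⁻¹ := le_max_left _ _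
    rcases le_total ‖x‖ 1 with h | h
    · calc ‖x‖ ≤ 1 := h
        _ ≤ max 1 c⁻¹ * (1 + ‖u x‖) ^ 1 := by
            rw [pow_one]
            nlinarith [norm_nonneg (u x)]
    · have h2 : ‖x‖ ≤ ‖x‖ ^ 2 := by nlinarith
      have h3 : ‖x‖ ^ 2 ≤ c⁻¹ * u x := by
        have hk := hkey x
        calc ‖x‖ ^ 2 = c⁻¹ * (c * ‖x‖ ^ 2) := by field_simp
          _ ≤ c⁻¹ * u x := by
              apply mul_le_mul_of_nonneg_left hk (by positivity)
      calc ‖x‖ ≤ c⁻¹ * u x := le_trans h2 h3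
        _ = c⁻¹ * ‖u x‖ := by rw [hux]
        _ ≤ max 1 c⁻¹ * (1 + ‖u x‖) ^ 1 := by
            rw [pow_one]
            have : c⁻¹ ≤ max 1 c⁻¹ := le_max_right _ _
            nlinarith [norm_nonneg (u x)]
  set m₀ : (EuclideanSpace ℝ (Fin d₂)) → ℝ := fun a => φ a * Real.exp (‖a‖ ^ 2) with hm₀
  have hm₀sm : ContDiff ℝ ∞ m₀ :=
    (hφ.of_le (by simp)).mul (Real.contDiff_exp.comp (contDiff_norm_sq ℝ))
  have hm₀cs : HasCompactSupport m₀ := hφc.mul_right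
  have tgm : Function.HasTemperateGrowth (fun x : (EuclideanSpace ℝ (Fin d₁)) × (EuclideanSpace ℝ (Fin d₂)) => m₀ x.2) :=
    my_tg_comp (my_tg_of_compactSupport hm₀sm hm₀cs)
      (ContinuousLinearMap.snd ℝ (EuclideanSpace ℝ (Fin d₁)) (EuclideanSpace ℝ (Fin d₂))).hasTemperateGrowth
  set G : SchwartzMap ((EuclideanSpace ℝ (Fin d₁)) × (EuclideanSpace ℝ (Fin d₂))) ℝ :=
    SchwartzMap.bilinLeftCLM (ContinuousLinearMap.mul ℝ ℝ) tgm
      (SchwartzMap.compCLM ℝ tgu hu_upper Es) with hG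
  refine ⟨G, fun ξ a => ?_⟩
  have hGval : G (ξ, a) = Es (u (ξ, a)) * m₀ a := rfl
  rw [hGval, hEs _ (hu0 (ξ, a))]
  by_cases ha : a = 0
  · rw [if_pos ha, ha]
    have hφ00 : φ (0 : (EuclideanSpace ℝ (Fin d₂))) = 0 := hφ0.self_of_nhds
    simp only [hm₀]
    simp [hφ00]
  · rw [if_neg ha]
    by_cases hφa : φ a = 0
    · simp only [hm₀]
      simp [hφa]
    · have hψa := hψ_supp a hφa
      have hna : (0:ℝ) < ‖a‖ := norm_pos_iff.mpr ha
      simp only [hm₀, hu]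
      rw [hψa, mul_comm (φ a) _, ← mul_assoc, ← Real.exp_add, mul_comm _ (φ a)]
      have harg : -((2 * ‖a‖)⁻¹ * ‖ξ‖ ^ 2 + ‖a‖ ^ 2) + ‖a‖ ^ 2 = -‖ξ‖ ^ 2 / (2 * ‖a‖) := by
        field_simp
        ring
      rw [harg]
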